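/- Let 𝔄(𝒢) be a symmetrically normed ideal of bounded operators on a separable Hilbert space 𝒢, let C be a bounded operator on a Hilbert space ℋ, and suppose A ∈ 𝔄(𝒢) admits the factorization A = B*B with B : 𝒢 → ℋ bounded. Then B*CB ∈ 𝔄(𝒢). -/

import Mathlib

noncomputable section

/-- A symmetrically normed ideal `𝔄(G)` of `B(G)`: a two-sided ideal of compact
operators which is a Banach space with respect to a norm `nrm` satisfying
`‖CAB‖_𝔄 ≤ ‖C‖ ‖A‖_𝔄 ‖B‖` and `‖A‖_𝔄 = s₁(A) = ‖A‖` for rank-one `A`. -/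
structure SymmNormedIdeal (G : Type*) [NormedAddCommGroup G]
    [InnerProductSpace ℂ G] where
  carrier : Set (G →L[ℂ] G)
  compact_mem : ∀ A ∈ carrier, IsCompactOperator A
  rankOne_mem : ∀ u v : G, ((innerSL ℂ u).smulRight v) ∈ carrier
  add_mem : ∀ A ∈ carrier, ∀ B ∈ carrier, A + B ∈ carrier
  comp_mem : ∀ A ∈ carrier, ∀ B C : G →L[ℂ] G, C ∘L A ∘L B ∈ carrier
  nrm : (G →L[ℂ] G) → ℝ
  nrm_nonneg : ∀ A, 0 ≤ nrm A
  nrm_eq_zero : ∀ A ∈ carrier, nrm A = 0 → A = 0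
  nrm_add : ∀ A ∈ carrier, ∀ B ∈ carrier, nrm (A + B) ≤ nrm A + nrm B
  nrm_smul : ∀ A ∈ carrier, ∀ c : ℂ, nrm (c • A) = ‖c‖ * nrm A
  nrm_comp : ∀ A ∈ carrier, ∀ B C : G →L[ℂ] G, nrm (C ∘L A ∘L B) ≤ ‖C‖ * nrm A * ‖B‖
  nrm_rankOne : ∀ u v : G, nrm ((innerSL ℂ u).smulRight v) = ‖(innerSL ℂ u).smulRight v‖
  complete : ∀ f : ℕ → (G →L[ℂ] G), (∀ n, f n ∈ carrier) →
    (∀ ε : ℝ, 0 < ε → ∃ N : ℕ, ∀ m n : ℕ, N ≤ m → N ≤ n → nrm (f m - f n) < ε) →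
    ∃ A ∈ carrier, ∀ ε : ℝ, 0 < ε → ∃ N : ℕ, ∀ n : ℕ, N ≤ n → nrm (f n - A) < ε

/-!
Write `P = √(B*B)`. Whenever `‖D x‖ ≤ c ‖B x‖`, the Douglas factorization gives
`√(D*D) = R P`, hence `D*D = R (B*B) R*` lies in the ideal. Taking `D = (C + iᵏ) B`,
polarization expresses `B*CB` as a linear combination of four such `D*D`.
-/

open ContinuousLinearMap Finset

/-- Douglas factorization. -/
theorem ContinuousLinearMap.exists_comp_eq_of_norm_apply_le {𝕜 E F K : Type*} [RCLike 𝕜]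
    [SeminormedAddCommGroup E] [NormedSpace 𝕜 E]
    [NormedAddCommGroup F] [InnerProductSpace 𝕜 F] [CompleteSpace F]
    [NormedAddCommGroup K] [NormedSpace 𝕜 K] [CompleteSpace K]
    (P : E →L[𝕜] F) (Q : E →L[𝕜] K) (c : ℝ) (h : ∀ x, ‖Q x‖ ≤ c * ‖P x‖) :
    ∃ R : F →L[𝕜] K, R ∘L P = Q := by
  set V := (LinearMap.range (P : E →ₗ[𝕜] F)).topologicalClosure
  let e : E →ₗ[𝕜] V := (P : E →ₗ[𝕜] F).codRestrict V
    fun x ↦ Submodule.le_topologicalClosure _ (LinearMap.mem_range_self _ x)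
  have he : DenseRange e := by
    rw [DenseRange, Subtype.dense_iff, ← Set.range_comp]
    exact (LinearMap.range (P : E →ₗ[𝕜] F)).topologicalClosure_coe.subset
  -- extend `P x ↦ Q x` from the range of `P` to its closure, and by zero on the complement
  refine ⟨(Q : E →ₗ[𝕜] K).extendOfNorm e ∘L V.orthogonalProjectionOnto, ?_⟩
  ext x
  have hx : V.orthogonalProjectionOnto (P x) = e x :=
    V.orthogonalProjectionOnto_mem_subspace_eq_self (e x)
  simp [hx, LinearMap.extendOfNorm_eq he ⟨c, h⟩]

theorem ContinuousLinearMap.norm_sqrt_adjoint_comp_self_apply {E F : Type*}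
    [NormedAddCommGroup E] [InnerProductSpace ℂ E] [CompleteSpace E]
    [NormedAddCommGroup F] [InnerProductSpace ℂ F] [CompleteSpace F]
    (B : E →L[ℂ] F) (x : E) : ‖CFC.sqrt (adjoint B ∘L B) x‖ = ‖B x‖ := by
  set P := CFC.sqrt (adjoint B ∘L B)
  have hP : adjoint P ∘L P = adjoint B ∘L B := by
    rw [← star_eq_adjoint, (IsSelfAdjoint.of_nonneg (CFC.sqrt_nonneg _)).star_eq]
    exact CFC.sqrt_mul_sqrt_self _ ((nonneg_iff_isPositive _).mpr (isPositive_adjoint_comp_self B))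
  refine (pow_left_inj₀ (norm_nonneg _) (norm_nonneg _) two_ne_zero).mp ?_
  rw [apply_norm_sq_eq_inner_adjoint_left, apply_norm_sq_eq_inner_adjoint_left, hP]

theorem ContinuousLinearMap.adjoint_comp_eq_polarization {E F : Type*}
    [NormedAddCommGroup E] [InnerProductSpace ℂ E] [CompleteSpace E]
    [NormedAddCommGroup F] [InnerProductSpace ℂ F] [CompleteSpace F]
    (X Y : E →L[ℂ] F) :
    adjoint Y ∘L X = (4⁻¹ : ℂ) • ∑ k ∈ range 4,
      Complex.I ^ k • adjoint (X + Complex.I ^ k • Y) ∘L (X + Complex.I ^ k • Y) := by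
  simp only [sum_range_succ, sum_range_zero, map_add, map_smulₛₗ, add_comp, comp_add, smul_comp,
    comp_smul, smul_add, smul_smul]
  simp [pow_succ, Complex.conj_I]
  module

namespace SymmNormedIdeal

variable {G H : Type*} [NormedAddCommGroup G] [InnerProductSpace ℂ G]

def toSubmodule (I : SymmNormedIdeal G) : Submodule ℂ (G →L[ℂ] G) where
  carrier := I.carrier
  add_mem' hA hB := I.add_mem _ hA _ hB
  zero_mem' := by
    simpa using I.comp_mem _ (I.rankOne_mem 0 0) 0 0
  smul_mem' c A hA := by
    simpa [smul_comp] using I.comp_mem A hA (.id ℂ G) (c • .id ℂ G)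

@[simp]
theorem mem_toSubmodule (I : SymmNormedIdeal G) {A : G →L[ℂ] G} :
    A ∈ I.toSubmodule ↔ A ∈ I.carrier := by
  rfl

variable [NormedAddCommGroup H] [InnerProductSpace ℂ H] [CompleteSpace G] [CompleteSpace H]

theorem adjoint_comp_self_mem_of_norm_apply_le (I : SymmNormedIdeal G) {B D : G →L[ℂ] H}
    (c : ℝ) (hB : adjoint B ∘L B ∈ I.carrier) (hD : ∀ x, ‖D x‖ ≤ c * ‖B x‖) :
    adjoint D ∘L D ∈ I.carrier := by
  obtain ⟨R, hRP⟩ := (CFC.sqrt (adjoint B ∘L B)).exists_comp_eq_of_norm_apply_le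
    (CFC.sqrt (adjoint D ∘L D)) c (by simpa only [norm_sqrt_adjoint_comp_self_apply] using hD)
  set P := CFC.sqrt (adjoint B ∘L B)
  set Q := CFC.sqrt (adjoint D ∘L D)
  have hP : adjoint P = P := (IsSelfAdjoint.of_nonneg (CFC.sqrt_nonneg _)).adjoint_eq
  have hQ : adjoint Q = Q := (IsSelfAdjoint.of_nonneg (CFC.sqrt_nonneg _)).adjoint_eq
  have hPR : P ∘L adjoint R = Q := by
    simpa only [adjoint_comp, hP, hQ] using congrArg adjoint hRP
  have hDD : adjoint D ∘L D = R ∘L (adjoint B ∘L B) ∘L adjoint R := by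
    rw [← CFC.sqrt_mul_sqrt_self (adjoint D ∘L D)
        ((nonneg_iff_isPositive _).mpr (isPositive_adjoint_comp_self D)),
      ← CFC.sqrt_mul_sqrt_self (adjoint B ∘L B)
        ((nonneg_iff_isPositive _).mpr (isPositive_adjoint_comp_self B))]
    calc Q * Q = (R ∘L P) ∘L (P ∘L adjoint R) := by rw [hRP, hPR]; rfl
      _ = R ∘L (P * P) ∘L adjoint R := rfl
  rw [hDD]
  exact I.comp_mem _ hB _ _

theorem adjoint_comp_mem_of_norm_apply_le (I : SymmNormedIdeal G) {B X Y : G →L[ℂ] H}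
    (a b : ℝ) (hB : adjoint B ∘L B ∈ I.carrier) (hX : ∀ x, ‖X x‖ ≤ a * ‖B x‖)
    (hY : ∀ x, ‖Y x‖ ≤ b * ‖B x‖) :
    adjoint Y ∘L X ∈ I.carrier := by
  have hXY : ∀ k : ℕ, ∀ x, ‖(X + Complex.I ^ k • Y) x‖ ≤ (a + b) * ‖B x‖ := fun k x ↦
    calc ‖(X + Complex.I ^ k • Y) x‖ ≤ ‖X x‖ + ‖Y x‖ := by
          simpa only [add_apply, smul_apply, norm_smul, norm_pow, Complex.norm_I, one_pow,
            one_mul] using norm_add_le (X x) (Complex.I ^ k • Y x)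
      _ ≤ (a + b) * ‖B x‖ := by linarith [hX x, hY x]
  rw [← mem_toSubmodule, adjoint_comp_eq_polarization]
  refine Submodule.smul_mem _ _ (Submodule.sum_mem _ fun k _ ↦ Submodule.smul_mem _ _ ?_)
  exact I.mem_toSubmodule.mpr (I.adjoint_comp_self_mem_of_norm_apply_le (a + b) hB (hXY k))

end SymmNormedIdeal

theorem symm_normed_ideal_sandwich_general
    {G H : Type*} [NormedAddCommGroup G] [InnerProductSpace ℂ G]
    [NormedAddCommGroup H] [InnerProductSpace ℂ H]
    [CompleteSpace G] [CompleteSpace H]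
    (I : SymmNormedIdeal G) (B : G →L[ℂ] H) (C : H →L[ℂ] H)
    (hA : (ContinuousLinearMap.adjoint B) ∘L B ∈ I.carrier) :
    (ContinuousLinearMap.adjoint B) ∘L (C ∘L B) ∈ I.carrier :=
  I.adjoint_comp_mem_of_norm_apply_le ‖C‖ 1 hA (fun x ↦ C.le_opNorm (B x))
    (fun x ↦ (one_mul ‖B x‖).ge)

/-- Let `𝔄(G)` be a symmetrically normed ideal on a separable Hilbert space `G`,
`C` a bounded operator on a Hilbert space `H`, and suppose `A = B*B ∈ 𝔄(G)`
with `B : G → H` bounded.  Then `B*CB ∈ 𝔄(G)`. -/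
theorem symm_normed_ideal_sandwich
    {G H : Type*} [NormedAddCommGroup G] [InnerProductSpace ℂ G]
    [NormedAddCommGroup H] [InnerProductSpace ℂ H]
    [CompleteSpace G] [CompleteSpace H] [TopologicalSpace.SeparableSpace G]
    (I : SymmNormedIdeal G) (B : G →L[ℂ] H) (C : H →L[ℂ] H)
    (hA : (ContinuousLinearMap.adjoint B) ∘L B ∈ I.carrier) :
    (ContinuousLinearMap.adjoint B) ∘L (C ∘L B) ∈ I.carrier :=
  symm_normed_ideal_sandwich_general I B C hA
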